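/- arXiv:1512.04234 — 4 statements merged into one kernel-verified Lean document; each statement's English description precedes it below -/
import Mathlib

section
/- Let β > 1 and d a positive integer. Suppose there exists a sequence of pairwise distinct nonzero real numbers (q_n) tending to 0, where each q_n = ∑_{k=0}^{m_n} c_k^{(n)} β^{-k-1} for some integers c_k^{(n)} with |c_k^{(n)}| ≤ d and c_0^{(n)} ≠ 0. Then there exists an infinite sequence (x_i)_{i≥1} of integers with |x_i| ≤ d, x_1 ≠ 0, and ∑_{i≥1} x_i β^{-i} = 0. -/
/-!
Sequences of digits in `{-d, …, d}` with nonzero leading digit form a compact subset of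
`ℕ → ℤ` (Tychonoff), and the value `x ↦ ∑ xᵢ β^{-i-1}` is continuous on it, being a uniform
limit of its partial sums. The set of values is therefore closed, and it contains every `q n`
(pad the finite word with zeros); hence it also contains their limit `0`.
-/

open Filter Set

noncomputable def digitValue (β : ℝ) (x : ℕ → ℤ) : ℝ := ∑' i, (x i : ℝ) / β ^ (i + 1)

def leadingDigitSeqs (d : ℕ) : Set (ℕ → ℤ) := {x | (∀ i, |x i| ≤ (d : ℤ)) ∧ x 0 ≠ 0}

lemma isCompact_leadingDigitSeqs (d : ℕ) : IsCompact (leadingDigitSeqs d) := by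
  have hbox : IsCompact (pi univ fun _ : ℕ => Icc (-(d : ℤ)) d) :=
    isCompact_univ_pi fun _ => (finite_Icc _ _).isCompact
  have hclosed : IsClosed (leadingDigitSeqs d) := by
    rw [leadingDigitSeqs, ofPred_and, ofPred_forall]
    exact (isClosed_iInter fun i => isClosed_le (by fun_prop) continuous_const).inter
      ((isClosed_discrete {n : ℤ | n ≠ 0}).preimage (f := fun x : ℕ → ℤ => x 0) (by fun_prop))
  exact hbox.of_isClosed_subset hclosed fun x hx i _ => abs_le.mp (hx.1 i)

lemma summable_div_pow_succ {β : ℝ} (hβ : 1 < β) (b : ℝ) :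
    Summable fun i : ℕ => b / β ^ (i + 1) := by
  have hgeom := summable_geometric_of_lt_one (inv_nonneg.mpr (zero_le_one.trans hβ.le))
    (inv_lt_one_of_one_lt₀ hβ)
  exact (hgeom.mul_left (b / β)).congr fun i => by ring

lemma continuousOn_digitValue {β : ℝ} (hβ : 1 < β) (d : ℕ) :
    ContinuousOn (digitValue β) {x | ∀ i, |x i| ≤ (d : ℤ)} := by
  have hβ0 : 0 < β := zero_lt_one.trans hβ
  refine continuousOn_tsum (fun i =>
    ((continuous_of_discreteTopology.comp (continuous_apply i)).div_const _).continuousOn)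
    (summable_div_pow_succ hβ d) fun i x hx => ?_
  rw [Real.norm_eq_abs, abs_div, abs_of_pos (pow_pos hβ0 _)]
  gcongr
  exact_mod_cast hx i

lemma isClosed_digitValue_image {β : ℝ} (hβ : 1 < β) (d : ℕ) :
    IsClosed (digitValue β '' leadingDigitSeqs d) :=
  ((isCompact_leadingDigitSeqs d).image_of_continuousOn
    ((continuousOn_digitValue hβ d).mono fun _ hx => hx.1)).isClosed

lemma digitValue_ite_le (β : ℝ) (c : ℕ → ℤ) (m : ℕ) :
    digitValue β (fun k => if k ≤ m then c k else 0) =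
      ∑ k ∈ Finset.range (m + 1), (c k : ℝ) / β ^ (k + 1) := by
  rw [digitValue, tsum_eq_sum (s := Finset.range (m + 1))]
  · refine Finset.sum_congr rfl fun k hk => ?_
    rw [if_pos (Nat.lt_succ_iff.mp (Finset.mem_range.mp hk))]
  · intro k hk
    rw [if_neg (by simpa using hk), Int.cast_zero, zero_div]

lemma mem_digitValue_image_of_finite {β : ℝ} {d m : ℕ} {c : ℕ → ℤ}
    (hc : ∀ k, |c k| ≤ (d : ℤ)) (hc0 : c 0 ≠ 0) :
    ∑ k ∈ Finset.range (m + 1), (c k : ℝ) / β ^ (k + 1) ∈ digitValue β '' leadingDigitSeqs d := by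
  refine ⟨_, ⟨fun k => ?_, by simpa using hc0⟩, digitValue_ite_le β c m⟩
  split_ifs
  · exact hc k
  · simp

theorem stmt_5_general (β : ℝ) (hβ : 1 < β) (d : ℕ)
    (q : ℕ → ℝ)
    (hlim : Tendsto q atTop (nhds 0))
    (hrep : ∀ n, ∃ (m : ℕ) (c : ℕ → ℤ), (∀ k, |c k| ≤ (d : ℤ)) ∧ c 0 ≠ 0 ∧
      q n = ∑ k ∈ Finset.range (m + 1), (c k : ℝ) / β ^ (k + 1)) :
    ∃ x : ℕ → ℤ, (∀ i, |x i| ≤ (d : ℤ)) ∧ x 0 ≠ 0 ∧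
      ∑' i : ℕ, (x i : ℝ) / β ^ (i + 1) = 0 := by
  have hq : ∀ n, q n ∈ digitValue β '' leadingDigitSeqs d := fun n => by
    obtain ⟨m, c, hc, hc0, hqn⟩ := hrep n
    exact hqn ▸ mem_digitValue_image_of_finite hc hc0
  obtain ⟨x, ⟨hxd, hx0⟩, hx⟩ :=
    (isClosed_digitValue_image hβ d).mem_of_tendsto hlim (Eventually.of_forall hq)
  exact ⟨x, hxd, hx0, hx⟩

/-- Compactness step: from a sequence of pairwise distinct nonzero numbers tending to 0,
each of the form ∑_{k=0}^{m} c_k β^{-k-1} with digits in {-d,…,d} and leading digit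
c_0 ≠ 0, one extracts an infinite nontrivial β-representation of 0. -/
theorem stmt_5 (β : ℝ) (hβ : 1 < β) (d : ℕ) (hd : 0 < d)
    (q : ℕ → ℝ) (hinj : Function.Injective q) (hne : ∀ n, q n ≠ 0)
    (hlim : Tendsto q atTop (nhds 0))
    (hrep : ∀ n, ∃ (m : ℕ) (c : ℕ → ℤ), (∀ k, |c k| ≤ (d : ℤ)) ∧ c 0 ≠ 0 ∧
      q n = ∑ k ∈ Finset.range (m + 1), (c k : ℝ) / β ^ (k + 1)) :
    ∃ x : ℕ → ℤ, (∀ i, |x i| ≤ (d : ℤ)) ∧ x 0 ≠ 0 ∧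
      ∑' i : ℕ, (x i : ℝ) / β ^ (i + 1) = 0 :=
  stmt_5_general β hβ d q hlim hrep
end

section
/- Let β be a Pisot number (a real algebraic integer β > 1 all of whose other complex conjugates have modulus < 1), with conjugates β = β_1, β_2, …, β_k (the roots of its minimal polynomial). Let d be a positive integer and let P be a polynomial with integer coefficients all of absolute value at most d. If P(β) ≠ 0, then |P(β)| · ∏_{j=2}^{k} (d/(1 - |β_j|)) ≥ 1, that is, |P(β)| ≥ ∏_{j=2}^{k} ((1 - |β_j|)/d). -/
open Polynomial IntermediateField

set_option synthInstance.maxHeartbeats 800000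
set_option maxHeartbeats 1600000

private lemma geom_aux (x : ℝ) (h0 : 0 ≤ x) (h1 : x < 1) (n : ℕ) :
    ∑ i ∈ Finset.range n, x ^ i ≤ 1 / (1 - x) := by
  have hx : 0 < 1 - x := by linarith
  rw [le_div_iff₀ hx]
  have h := geom_sum_mul x n
  nlinarith [pow_nonneg h0 n]

private lemma prod_map_le (f g : ℂ → ℝ) (s : Multiset ℂ)
    (h : ∀ r ∈ s, 0 ≤ f r ∧ f r ≤ g r) :
    (s.map f).prod ≤ (s.map g).prod := by
  induction s using Multiset.induction with
  | empty => simp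
  | cons a s ih =>
      simp only [Multiset.map_cons, Multiset.prod_cons]
      have ha := h a (Multiset.mem_cons_self a s)
      have hs := fun r hr => h r (Multiset.mem_cons_of_mem hr)
      have h1 : (0:ℝ) ≤ (s.map f).prod := Multiset.prod_nonneg (by
        intro x hx
        obtain ⟨r, hr, rfl⟩ := Multiset.mem_map.mp hx
        exact (hs r hr).1)
      exact mul_le_mul ha.2 (ih hs) h1 (le_trans ha.1 ha.2)

/-- Garsia-type lower bound: if β is a Pisot number with conjugates β_2,…,β_k (the
complex roots of its minimal polynomial other than β), and P is an integer polynomial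
with coefficients bounded by d such that P(β) ≠ 0, then
|P(β)| · ∏_{j=2}^k d/(1-|β_j|) ≥ 1. -/
theorem stmt_7 (β : ℝ) (hβ : 1 < β) (hint : IsIntegral ℤ β)
    (hpisot : ∀ r ∈ ((minpoly ℤ β).map (Int.castRingHom ℂ)).roots,
      r ≠ (β : ℂ) → ‖r‖ < 1)
    (d : ℕ) (hd : 0 < d) (P : Polynomial ℤ)
    (hP : ∀ k, |P.coeff k| ≤ (d : ℤ)) (hPβ : aeval β P ≠ 0) :
    1 ≤ |aeval β P| *
      (((((minpoly ℤ β).map (Int.castRingHom ℂ)).roots.filter (· ≠ (β : ℂ))).map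
        (fun r => (d : ℝ) / (1 - ‖r‖))).prod) := by
  have hβQ : IsIntegral ℚ β := hint.tower_top
  haveI : FiniteDimensional ℚ ℚ⟮β⟯ := IntermediateField.adjoin.finiteDimensional hβQ
  set b : ℚ⟮β⟯ := IntermediateField.AdjoinSimple.gen ℚ β with hbdef
  have hbmap : algebraMap ℚ⟮β⟯ ℝ b = β := IntermediateField.AdjoinSimple.algebraMap_gen ℚ β
  -- image of aeval b P in ℝ
  have hx_map : algebraMap ℚ⟮β⟯ ℝ (aeval b P) = aeval β P := by
    have := aeval_algHom_apply ((ℚ⟮β⟯.val).restrictScalars ℤ) b P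
    simpa [hbmap, show (b : ℝ) = β from hbmap] using this.symm
  have hx0 : aeval b P ≠ 0 := fun h => hPβ (by rw [← hx_map, h, map_zero])
  have hbint : IsIntegral ℤ b := by
    refine (isIntegral_algebraMap_iff (algebraMap ℚ⟮β⟯ ℝ).injective).mp ?_
    rw [hbmap]; exact hint
  have hxint : IsIntegral ℤ (aeval b P) := by
    have hmem : aeval b P ∈ integralClosure ℤ ℚ⟮β⟯ := by
      rw [show b = algebraMap (integralClosure ℤ ℚ⟮β⟯) ℚ⟮β⟯ ⟨b, hbint⟩ from rfl,
        aeval_algebraMap_apply]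
      exact (aeval (⟨b, hbint⟩ : integralClosure ℤ ℚ⟮β⟯) P).2
    exact hmem
  have hn : IsIntegral ℤ (Algebra.norm ℚ (aeval b P)) := Algebra.isIntegral_norm ℚ hxint
  obtain ⟨M, hM⟩ := IsIntegrallyClosed.isIntegral_iff.mp hn
  have hM0 : M ≠ 0 := by
    intro h
    have : Algebra.norm ℚ (aeval b P) ≠ 0 := Algebra.norm_ne_zero_iff.mpr hx0
    rw [← hM, h] at this
    simp at this
  have h1M : (1:ℝ) ≤ |(M:ℝ)| := by exact_mod_cast Int.one_le_abs hM0
  -- embeddings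
  have hnorm := Algebra.norm_eq_prod_embeddings ℚ ℂ (aeval b P)
  have habs : |(M:ℝ)| = ∏ σ : ℚ⟮β⟯ →ₐ[ℚ] ℂ, ‖σ (aeval b P)‖ := by
    have h2 : ‖algebraMap ℚ ℂ (Algebra.norm ℚ (aeval b P))‖
        = ∏ σ : ℚ⟮β⟯ →ₐ[ℚ] ℂ, ‖σ (aeval b P)‖ := by
      rw [hnorm, norm_prod]
    rw [← hM] at h2
    simpa using h2
  have hσ : ∀ σ : ℚ⟮β⟯ →ₐ[ℚ] ℂ, σ (aeval b P) = aeval (σ b) P := by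
    intro σ
    exact (aeval_algHom_apply (σ.restrictScalars ℤ) b P).symm
  set e := IntermediateField.algHomAdjoinIntegralEquiv ℚ (K := ℂ) hβQ with he
  have hprod : (∏ σ : ℚ⟮β⟯ →ₐ[ℚ] ℂ, ‖σ (aeval b P)‖)
      = ∏ y : {x // x ∈ (minpoly ℚ β).aroots ℂ}, ‖aeval (y : ℂ) P‖ := by
    rw [eq_comm]
    refine Fintype.prod_equiv e.symm _ _ fun y => ?_
    have h3 := hσ (e.symm y)
    have h4 := IntermediateField.algHomAdjoinIntegralEquiv_symm_apply_gen ℚ (K := ℂ) hβQ y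
    exact (congrArg norm (h3.trans (congrArg (fun z : ℂ => aeval z P) h4))).symm
  -- identify aroots with the roots multiset in the statement
  have hq : (minpoly ℚ β).aroots ℂ = ((minpoly ℤ β).map (Int.castRingHom ℂ)).roots := by
    rw [aroots_def, minpoly.isIntegrallyClosed_eq_field_fractions' ℚ hint, Polynomial.map_map,
      RingHom.ext_int ((algebraMap ℚ ℂ).comp (algebraMap ℤ ℚ)) (Int.castRingHom ℂ)]
  have hsep : ((minpoly ℤ β).map (Int.castRingHom ℂ)).Separable := by
    have h1 : (minpoly ℚ β).Separable := (minpoly.irreducible hβQ).separable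
    have h2 := h1.map (f := algebraMap ℚ ℂ)
    rw [minpoly.isIntegrallyClosed_eq_field_fractions' ℚ hint, Polynomial.map_map,
      RingHom.ext_int ((algebraMap ℚ ℂ).comp (algebraMap ℤ ℚ)) (Int.castRingHom ℂ)] at h2
    exact h2
  have hnod : (((minpoly ℤ β).map (Int.castRingHom ℂ)).roots).Nodup := nodup_roots hsep
  -- from subtype product to multiset product
  have hsub : (∏ y : {x // x ∈ (minpoly ℚ β).aroots ℂ}, ‖aeval (y : ℂ) P‖)
      = ((((minpoly ℤ β).map (Int.castRingHom ℂ)).roots).map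
          (fun r => ‖aeval r P‖)).prod := by
    rw [← Finset.prod_subtype (((minpoly ℚ β).aroots ℂ).toFinset)
      (fun x => Multiset.mem_toFinset) (fun r => ‖aeval r P‖)]
    rw [Finset.prod_eq_multiset_prod, Multiset.toFinset_val, Multiset.dedup_eq_self.mpr, hq]
    rw [hq]
    exact hnod
  have hofReal : ∀ (p : Polynomial ℤ) (y : ℝ), aeval (y : ℂ) p = ((aeval y p : ℝ) : ℂ) := by
    intro p y
    simpa using aeval_algHom_apply (Complex.ofRealAm.restrictScalars ℤ) y p
  have hβR : (β : ℂ) ∈ ((minpoly ℤ β).map (Int.castRingHom ℂ)).roots := by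
    rw [mem_roots (((minpoly.monic hint).map (Int.castRingHom ℂ)).ne_zero), IsRoot, eval_map,
      ← algebraMap_int_eq, ← aeval_def, hofReal, minpoly.aeval, Complex.ofReal_zero]
  have hsplit : ((minpoly ℤ β).map (Int.castRingHom ℂ)).roots
      = (β : ℂ) ::ₘ ((minpoly ℤ β).map (Int.castRingHom ℂ)).roots.filter (· ≠ (β : ℂ)) := by
    rw [← Multiset.Nodup.erase_eq_filter (β : ℂ) hnod]
    exact (Multiset.cons_erase hβR).symm
  have hbound : ∀ r ∈ ((minpoly ℤ β).map (Int.castRingHom ℂ)).roots.filter (· ≠ (β : ℂ)),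
      0 ≤ ‖aeval r P‖ ∧
        ‖aeval r P‖ ≤ (d : ℝ) / (1 - ‖r‖) := by
    intro r hr
    rw [Multiset.mem_filter] at hr
    have hr1 : ‖r‖ < 1 := hpisot r hr.1 (by simpa using hr.2)
    have hr0 : (0:ℝ) < 1 - ‖r‖ := by linarith
    refine ⟨norm_nonneg _, ?_⟩
    have hsum : aeval r P = ∑ i ∈ Finset.range (P.natDegree + 1), (P.coeff i : ℂ) * r ^ i := by
      rw [aeval_eq_sum_range]
      exact Finset.sum_congr rfl fun i _ => by rw [zsmul_eq_mul]
    calc ‖aeval r P‖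
        ≤ ∑ i ∈ Finset.range (P.natDegree + 1), ‖(P.coeff i : ℂ) * r ^ i‖ := by
          rw [hsum]; exact norm_sum_le _ _
      _ ≤ ∑ i ∈ Finset.range (P.natDegree + 1), (d : ℝ) * ‖r‖ ^ i := by
          refine Finset.sum_le_sum fun i _ => ?_
          rw [norm_mul, norm_pow]
          have hci : ‖(P.coeff i : ℂ)‖ ≤ (d : ℝ) := by
            rw [Complex.norm_intCast]
            exact_mod_cast hP i
          exact mul_le_mul_of_nonneg_right hci (pow_nonneg (norm_nonneg _) i)
      _ = (d : ℝ) * ∑ i ∈ Finset.range (P.natDegree + 1), ‖r‖ ^ i := by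
          rw [Finset.mul_sum]
      _ ≤ (d : ℝ) * (1 / (1 - ‖r‖)) :=
          mul_le_mul_of_nonneg_left (geom_aux _ (norm_nonneg _) hr1 _) (by positivity)
      _ = (d : ℝ) / (1 - ‖r‖) := by rw [mul_one_div]
  have hPβc : ‖aeval ((β : ℝ) : ℂ) P‖ = |aeval β P| := by
    rw [hofReal, Complex.norm_real, Real.norm_eq_abs]
  have hmain : |(M:ℝ)| = ((((minpoly ℤ β).map (Int.castRingHom ℂ)).roots).map
      (fun r => ‖aeval r P‖)).prod := by
    rw [habs, hprod, hsub]
  have key : (1:ℝ) ≤ |aeval β P| *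
      (((((minpoly ℤ β).map (Int.castRingHom ℂ)).roots.filter (· ≠ (β : ℂ))).map
        (fun r => ‖aeval r P‖)).prod) := by
    have h := h1M
    rw [hmain, hsplit, Multiset.map_cons, Multiset.prod_cons, hPβc] at h
    exact h
  exact le_trans key
    (mul_le_mul_of_nonneg_left (prod_map_le _ _ _ hbound) (abs_nonneg _))
end

section
/- Let β be a Pisot number and d a positive integer. Then there exists ε > 0 such that any two distinct elements of Y_d(β) = { ∑_{k=0}^{n} a_k β^k : n ∈ ℕ, a_k ∈ ℤ, |a_k| ≤ d } differ by at least ε. In particular, Y_d(β) is not dense in ℝ. -/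
/-!
The difference of two distinct elements of `Y_d(β) = boundedDigitSums β d` is a nonzero value
`Q(β)` of an integer polynomial with coefficients bounded by `2d`. Since `Q(β)` is a nonzero
algebraic integer of `ℚ(β)`, its norm is a nonzero integer, so the product of `|σ (Q(β))|` over
all complex embeddings `σ` is at least `1`. Every embedding other than the real one sends `β` to a
conjugate `β'` with `|β'| < 1`, so `|Q(β')| ≤ 2d / (1 - |β'|)`; this leaves a uniform lower bound
on `|Q(β)|`.
-/

open Finset IntermediateField

def boundedDigitSums (β : ℝ) (d : ℕ) : Set ℝ :=
  {r : ℝ | ∃ (n : ℕ) (a : ℕ → ℤ), (∀ k, |a k| ≤ (d : ℤ)) ∧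
    r = ∑ k ∈ Finset.range (n + 1), (a k : ℝ) * β ^ k}

theorem exists_digits_of_mem_boundedDigitSums {β : ℝ} {d : ℕ} {x : ℝ}
    (hx : x ∈ boundedDigitSums β d) : ∃ n, ∀ N, n ≤ N → ∃ a : ℕ → ℤ, (∀ k, |a k| ≤ (d : ℤ)) ∧
      x = ∑ k ∈ range (N + 1), (a k : ℝ) * β ^ k := by
  obtain ⟨n, a, ha, rfl⟩ := hx
  refine ⟨n, fun N hN => ⟨fun k => if k ≤ n then a k else 0, fun k => ?_, ?_⟩⟩
  · dsimp only
    split_ifs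
    exacts [ha k, by simp]
  · simp only [Int.cast_ite, Int.cast_zero, ite_mul, zero_mul]
    rw [← sum_filter]
    congr 1
    ext k
    simp only [mem_range, mem_filter]
    omega

theorem sub_mem_boundedDigitSums {β : ℝ} {d : ℕ} {x y : ℝ} (hx : x ∈ boundedDigitSums β d)
    (hy : y ∈ boundedDigitSums β d) : x - y ∈ boundedDigitSums β (2 * d) := by
  obtain ⟨n₁, hx⟩ := exists_digits_of_mem_boundedDigitSums hx
  obtain ⟨n₂, hy⟩ := exists_digits_of_mem_boundedDigitSums hy
  obtain ⟨a, ha, rfl⟩ := hx (max n₁ n₂) (le_max_left _ _)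
  obtain ⟨b, hb, rfl⟩ := hy (max n₁ n₂) (le_max_right _ _)
  refine ⟨max n₁ n₂, a - b, fun k => ?_, ?_⟩
  · rw [Pi.sub_apply]
    push_cast
    linarith [abs_sub (a k) (b k), ha k, hb k]
  · simp [← sum_sub_distrib, sub_mul]

theorem aroots_minpoly_rat_eq {S : Type*} [CommRing S] [IsDomain S] [Algebra ℚ S] {α : S}
    (hα : IsIntegral ℤ α) :
    (minpoly ℚ α).aroots ℂ = ((minpoly ℤ α).map (Int.castRingHom ℂ)).roots := by
  rw [minpoly.isIntegrallyClosed_eq_field_fractions' ℚ hα, Polynomial.aroots, Polynomial.map_map]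
  congr 2

noncomputable def realEmbedding (β : ℝ) : ℚ⟮β⟯ →ₐ[ℚ] ℂ :=
  (Complex.ofRealAm.restrictScalars ℚ).comp (ℚ⟮β⟯).val

theorem norm_embedding_gen_lt_one {β : ℝ} (hint : IsIntegral ℤ β)
    (hpisot : ∀ r ∈ ((minpoly ℤ β).map (Int.castRingHom ℂ)).roots, r ≠ (β : ℂ) → ‖r‖ < 1)
    {σ : ℚ⟮β⟯ →ₐ[ℚ] ℂ} (hσ : σ ≠ realEmbedding β) : ‖σ (AdjoinSimple.gen ℚ β)‖ < 1 := by
  refine hpisot _ ?_ fun h => hσ ?_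
  · rw [← aroots_minpoly_rat_eq hint]
    exact (algHomAdjoinIntegralEquiv ℚ hint.tower_top σ).2
  · exact adjoin_algHom_ext ℚ fun x hx => by subst hx; exact h

theorem one_le_prod_norm_embeddings {K : Type*} [Field K] [Algebra ℚ K] [FiniteDimensional ℚ K]
    {x : K} (hx : IsIntegral ℤ x) (hx0 : x ≠ 0) : 1 ≤ ∏ σ : K →ₐ[ℚ] ℂ, ‖σ x‖ := by
  obtain ⟨m, hm⟩ := IsIntegrallyClosed.isIntegral_iff.mp (Algebra.isIntegral_norm ℚ hx)
  have hm0 : m ≠ 0 := by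
    rintro rfl
    exact (Algebra.norm_ne_zero_iff.mpr hx0) (by rw [← hm, map_zero])
  rw [← norm_prod, ← Algebra.norm_eq_prod_embeddings, ← hm]
  simp only [algebraMap_int_eq, eq_intCast, map_intCast, Complex.norm_intCast]
  exact_mod_cast Int.one_le_abs hm0

theorem norm_sum_mul_pow_le {𝕜 : Type*} [NormedField 𝕜] {z : 𝕜} (hz : ‖z‖ < 1) {D : ℝ}
    {c : ℕ → 𝕜} (hc : ∀ k, ‖c k‖ ≤ D) (n : ℕ) :
    ‖∑ k ∈ range n, c k * z ^ k‖ ≤ D / (1 - ‖z‖) := by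
  have hD : 0 ≤ D := (norm_nonneg _).trans (hc 0)
  have hgeom : ∑ k ∈ range n, ‖z‖ ^ k ≤ (1 - ‖z‖)⁻¹ := by
    rw [← tsum_geometric_of_lt_one (norm_nonneg z) hz]
    exact (summable_geometric_of_lt_one (norm_nonneg z) hz).sum_le_tsum _ fun k _ => by positivity
  calc ‖∑ k ∈ range n, c k * z ^ k‖
      ≤ ∑ k ∈ range n, D * ‖z‖ ^ k := by
        refine (norm_sum_le _ _).trans (sum_le_sum fun k _ => ?_)
        rw [norm_mul, norm_pow]
        exact mul_le_mul_of_nonneg_right (hc k) (by positivity)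
    _ = D * ∑ k ∈ range n, ‖z‖ ^ k := by rw [mul_sum]
    _ ≤ D / (1 - ‖z‖) := by rw [div_eq_mul_inv]; gcongr

theorem exists_pos_le_abs_of_mem_boundedDigitSums {β : ℝ} (hint : IsIntegral ℤ β)
    (hpisot : ∀ r ∈ ((minpoly ℤ β).map (Int.castRingHom ℂ)).roots, r ≠ (β : ℂ) → ‖r‖ < 1)
    (D : ℕ) : ∃ ε > 0, ∀ x ∈ boundedDigitSums β D, x ≠ 0 → ε ≤ |x| := by
  classical
  have : FiniteDimensional ℚ ℚ⟮β⟯ := adjoin.finiteDimensional hint.tower_top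
  set g := AdjoinSimple.gen ℚ β
  have hg : IsIntegral ℤ g :=
    (isIntegral_algebraMap_iff (algebraMap ℚ⟮β⟯ ℝ).injective).mp hint
  set S := univ.erase (realEmbedding β)
  have hS : ∀ σ ∈ S, ‖σ g‖ < 1 := fun σ hσ =>
    norm_embedding_gen_lt_one hint hpisot (ne_of_mem_erase hσ)
  set P := ∏ σ ∈ S, D / (1 - ‖σ g‖)
  have hP : 0 ≤ P :=
    prod_nonneg fun σ hσ => div_nonneg (by positivity) (sub_nonneg.mpr (hS σ hσ).le)
  refine ⟨(P + 1)⁻¹, by positivity, ?_⟩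
  rintro _ ⟨n, a, ha, rfl⟩ hne
  set x : ℚ⟮β⟯ := ∑ k ∈ range (n + 1), (a k : ℚ⟮β⟯) * g ^ k
  have hσx : ∀ σ : ℚ⟮β⟯ →ₐ[ℚ] ℂ, σ x = ∑ k ∈ range (n + 1), (a k : ℂ) * σ g ^ k := by
    intro σ; simp [x]
  have hx : IsIntegral ℤ x :=
    IsIntegral.sum _ fun k _ => (isIntegral_algebraMap (x := a k)).mul (hg.pow k)
  have hxβ : algebraMap ℚ⟮β⟯ ℝ x = ∑ k ∈ range (n + 1), (a k : ℝ) * β ^ k := by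
    simp [x, g]
  have hx0 : x ≠ 0 := by
    rintro h
    rw [h, map_zero] at hxβ
    exact hne hxβ.symm
  have hreal : ‖realEmbedding β x‖ = |∑ k ∈ range (n + 1), (a k : ℝ) * β ^ k| := by
    rw [← hxβ]
    exact Complex.norm_real _
  rw [inv_le_iff_one_le_mul₀ (by positivity)]
  calc (1 : ℝ) ≤ ∏ σ : ℚ⟮β⟯ →ₐ[ℚ] ℂ, ‖σ x‖ := one_le_prod_norm_embeddings hx hx0
    _ = ‖realEmbedding β x‖ * ∏ σ ∈ S, ‖σ x‖ := (mul_prod_erase _ _ (mem_univ _)).symm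
    _ ≤ |∑ k ∈ range (n + 1), (a k : ℝ) * β ^ k| * P := by
        rw [← hreal]
        gcongr
        refine prod_le_prod (fun _ _ => norm_nonneg _) fun σ hσ => ?_
        rw [hσx]
        refine norm_sum_mul_pow_le (hS σ hσ) (fun k => ?_) _
        rw [Complex.norm_intCast]
        exact_mod_cast ha k
    _ ≤ _ := by gcongr; exact le_add_of_nonneg_right zero_le_one

theorem exists_pos_le_abs_sub_of_mem_boundedDigitSums {β : ℝ} (hint : IsIntegral ℤ β)
    (hpisot : ∀ r ∈ ((minpoly ℤ β).map (Int.castRingHom ℂ)).roots, r ≠ (β : ℂ) → ‖r‖ < 1)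
    (d : ℕ) : ∃ ε > 0, ∀ x ∈ boundedDigitSums β d, ∀ y ∈ boundedDigitSums β d, x ≠ y →
      ε ≤ |x - y| := by
  obtain ⟨ε, hε, h⟩ := exists_pos_le_abs_of_mem_boundedDigitSums hint hpisot (2 * d)
  exact ⟨ε, hε, fun x hx y hy hxy => h _ (sub_mem_boundedDigitSums hx hy) (sub_ne_zero.mpr hxy)⟩

theorem not_dense_of_forall_le_abs_sub {s : Set ℝ} {ε : ℝ} (hε : 0 < ε)
    (hs : ∀ x ∈ s, ∀ y ∈ s, x ≠ y → ε ≤ |x - y|) : ¬ Dense s := by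
  intro hd
  obtain ⟨x, hxs, hx⟩ := hd.exists_between hε
  obtain ⟨y, hys, hy⟩ := hd.exists_between hx.1
  have := hs x hxs y hys hy.2.ne'
  rw [abs_of_pos (sub_pos.mpr hy.2)] at this
  linarith [hx.2, hy.1]

theorem stmt_8_general (β : ℝ) (hint : IsIntegral ℤ β)
    (hpisot : ∀ r ∈ ((minpoly ℤ β).map (Int.castRingHom ℂ)).roots,
      r ≠ (β : ℂ) → ‖r‖ < 1)
    (d : ℕ) :
    (∃ ε > 0, ∀ x ∈ {r : ℝ | ∃ (n : ℕ) (a : ℕ → ℤ), (∀ k, |a k| ≤ (d : ℤ)) ∧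
          r = ∑ k ∈ Finset.range (n + 1), (a k : ℝ) * β ^ k},
        ∀ y ∈ {r : ℝ | ∃ (n : ℕ) (a : ℕ → ℤ), (∀ k, |a k| ≤ (d : ℤ)) ∧
          r = ∑ k ∈ Finset.range (n + 1), (a k : ℝ) * β ^ k},
        x ≠ y → ε ≤ |x - y|) ∧
      ¬ Dense {r : ℝ | ∃ (n : ℕ) (a : ℕ → ℤ), (∀ k, |a k| ≤ (d : ℤ)) ∧
          r = ∑ k ∈ Finset.range (n + 1), (a k : ℝ) * β ^ k} := by
  obtain ⟨ε, hε, hsep⟩ := exists_pos_le_abs_sub_of_mem_boundedDigitSums hint hpisot d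
  exact ⟨⟨ε, hε, hsep⟩, not_dense_of_forall_le_abs_sub hε hsep⟩

/-- For a Pisot number β, the spectrum Y_d(β) is uniformly discrete: distinct elements
differ by at least some ε > 0; in particular Y_d(β) is not dense in ℝ. -/
theorem stmt_8 (β : ℝ) (hβ : 1 < β) (hint : IsIntegral ℤ β)
    (hpisot : ∀ r ∈ ((minpoly ℤ β).map (Int.castRingHom ℂ)).roots,
      r ≠ (β : ℂ) → ‖r‖ < 1)
    (d : ℕ) (hd : 0 < d) :
    (∃ ε > 0, ∀ x ∈ {r : ℝ | ∃ (n : ℕ) (a : ℕ → ℤ), (∀ k, |a k| ≤ (d : ℤ)) ∧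
          r = ∑ k ∈ Finset.range (n + 1), (a k : ℝ) * β ^ k},
        ∀ y ∈ {r : ℝ | ∃ (n : ℕ) (a : ℕ → ℤ), (∀ k, |a k| ≤ (d : ℤ)) ∧
          r = ∑ k ∈ Finset.range (n + 1), (a k : ℝ) * β ^ k},
        x ≠ y → ε ≤ |x - y|) ∧
      ¬ Dense {r : ℝ | ∃ (n : ℕ) (a : ℕ → ℤ), (∀ k, |a k| ≤ (d : ℤ)) ∧
          r = ∑ k ∈ Finset.range (n + 1), (a k : ℝ) * β ^ k} :=
  stmt_8_general β hint hpisot d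
end

section
/- Let β be a Pisot number, d a positive integer, and c > 0 a real number. Then the set Y_d(β) ∩ [-c, c] is finite, where Y_d(β) = { ∑_{k=0}^{n} a_k β^k : n ∈ ℕ, a_k ∈ ℤ, |a_k| ≤ d }. In particular, taking d = ⌈β⌉ - 1 and c = (⌈β⌉-1)/(β-1), every Pisot number is an F-number. -/
/-!
Every element of `Y_D(β)` is an algebraic integer of `ℚ(β)`. Under the real embedding it lies
in `[-c, c]`, and every other complex embedding sends `β` to a conjugate `β'` with `|β'| < 1`,
where the geometric series bounds it by `D / (1 - |β'|)`. Algebraic integers of a number field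
whose conjugates are all bounded form a finite set.
-/

open Polynomial IntermediateField Finset

-- `Y_D(x)` in the paper's notation.
def digitSums {R : Type*} [Ring R] (D : ℤ) (x : R) : Set R :=
  {y | ∃ (n : ℕ) (a : ℕ → ℤ), (∀ k, |a k| ≤ D) ∧ y = ∑ k ∈ range (n + 1), (a k : R) * x ^ k}

section digitSums

variable {R S : Type*} [Ring R] [Ring S] {D : ℤ} {x : R}

theorem image_digitSums (f : R →+* S) : f '' digitSums D x = digitSums D (f x) := by
  ext y
  constructor
  · rintro ⟨_, ⟨n, a, ha, rfl⟩, rfl⟩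
    exact ⟨n, a, ha, by simp [map_sum]⟩
  · rintro ⟨n, a, ha, rfl⟩
    exact ⟨_, ⟨n, a, ha, rfl⟩, by simp [map_sum]⟩

theorem RingHom.eqOn_digitSums {f g : R →+* S} (h : f x = g x) :
    Set.EqOn f g (digitSums D x) := by
  rintro _ ⟨n, a, -, rfl⟩
  simp [map_sum, h]

end digitSums

theorem IsIntegral.of_mem_digitSums {R : Type*} [CommRing R] {D : ℤ} {x y : R}
    (hx : IsIntegral ℤ x) (hy : y ∈ digitSums D x) : IsIntegral ℤ y := by
  obtain ⟨n, a, -, rfl⟩ := hy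
  exact IsIntegral.sum _ fun k _ => (isIntegral_algebraMap (x := a k)).mul (hx.pow k)

theorem norm_intCast_le_abs {R : Type*} [SeminormedRing R] [NormOneClass R] (z : ℤ) :
    ‖(z : R)‖ ≤ |z| := by
  rw [← norm_natAbs]
  simpa using Nat.norm_cast_le (α := R) z.natAbs

theorem norm_le_of_mem_digitSums {R : Type*} [SeminormedRing R] [NormOneClass R] {D : ℤ}
    {x y : R} (hx : ‖x‖ < 1) (hy : y ∈ digitSums D x) : ‖y‖ ≤ D / (1 - ‖x‖) := by
  obtain ⟨n, a, ha, rfl⟩ := hy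
  have hD : (0 : ℝ) ≤ D := by exact_mod_cast (abs_nonneg _).trans (ha 0)
  calc ‖∑ k ∈ range (n + 1), (a k : R) * x ^ k‖
      ≤ ∑ k ∈ range (n + 1), (D : ℝ) * ‖x‖ ^ k := by
        refine (norm_sum_le _ _).trans (sum_le_sum fun k _ => ?_)
        refine (norm_mul_le _ _).trans (mul_le_mul ?_ (norm_pow_le _ _) (norm_nonneg _) hD)
        exact (norm_intCast_le_abs _).trans (by exact_mod_cast ha k)
    _ = D * ∑ k ∈ Ico 0 (n + 1), ‖x‖ ^ k := by rw [mul_sum, range_eq_Ico]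
    _ ≤ D * (‖x‖ ^ 0 / (1 - ‖x‖)) :=
        mul_le_mul_of_nonneg_left (geom_sum_Ico_le_of_lt_one (norm_nonneg _) hx) hD
    _ = D / (1 - ‖x‖) := by rw [pow_zero, mul_one_div]

theorem map_mem_roots_minpoly {A B : Type*} [CommRing A] [CommRing B] [IsDomain B]
    (f : A →+* B) {x : A} (hx : IsIntegral ℤ x) :
    f x ∈ ((minpoly ℤ x).map (Int.castRingHom B)).roots := by
  rw [mem_roots ((minpoly.monic hx).map _).ne_zero, IsRoot, eval_map,
    RingHom.ext_int (Int.castRingHom B) (f.comp (algebraMap ℤ A)), ← hom_eval₂,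
    ← aeval_def, minpoly.aeval, map_zero]

theorem NumberField.finite_of_forall_exists_norm_le {K : Type*} [Field K] [NumberField K]
    {S : Set K} (hint : ∀ x ∈ S, IsIntegral ℤ x) (hbdd : ∀ φ : K →+* ℂ, ∃ C, ∀ x ∈ S, ‖φ x‖ ≤ C) :
    S.Finite := by
  choose C hC using hbdd
  obtain ⟨B, hB⟩ := (Set.finite_range C).bddAbove
  exact (Embeddings.finite_of_norm_le K ℂ B).subset fun x hx =>
    ⟨hint x hx, fun φ => (hC φ x hx).trans (hB ⟨φ, rfl⟩)⟩

theorem finite_digitSums_inter_Icc {β : ℝ} (hint : IsIntegral ℤ β)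
    (hpisot : ∀ r ∈ ((minpoly ℤ β).map (Int.castRingHom ℂ)).roots, r ≠ (β : ℂ) → ‖r‖ < 1)
    (D : ℤ) (c : ℝ) : (digitSums D β ∩ Set.Icc (-c) c).Finite := by
  have : FiniteDimensional ℚ ℚ⟮β⟯ := adjoin.finiteDimensional hint.tower_top
  have : NumberField ℚ⟮β⟯ := ⟨⟩
  set ι := algebraMap ℚ⟮β⟯ ℝ
  set b := AdjoinSimple.gen ℚ β
  have hιb : ι b = β := AdjoinSimple.algebraMap_gen ℚ β
  have hb : IsIntegral ℤ b := by
    rwa [← isIntegral_algebraMap_iff ι.injective, hιb]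
  have hmin : minpoly ℤ b = minpoly ℤ β := by
    rw [← minpoly.algebraMap_eq ι.injective, hιb]
  have hfin : (digitSums D b ∩ ι ⁻¹' Set.Icc (-c) c).Finite := by
    refine NumberField.finite_of_forall_exists_norm_le (fun x hx => hb.of_mem_digitSums hx.1)
      fun φ => ⟨max c (D / (1 - ‖φ b‖)), fun x ⟨hxD, hxc⟩ => ?_⟩
    by_cases hφ : φ b = β
    · have hφx : φ x = ι x :=
        RingHom.eqOn_digitSums (g := Complex.ofRealHom.comp ι) (by simp [hφ, hιb]) hxD
      rw [hφx, Complex.norm_real, Real.norm_eq_abs]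
      exact le_max_of_le_left (abs_le.mpr hxc)
    · have hconj : ‖φ b‖ < 1 := hpisot _ (hmin ▸ map_mem_roots_minpoly φ hb) hφ
      exact le_max_of_le_right <|
        norm_le_of_mem_digitSums hconj (image_digitSums φ ▸ Set.mem_image_of_mem φ hxD)
  refine (hfin.image ι).subset ?_
  rintro _ ⟨hy, hyc⟩
  rw [← hιb, ← image_digitSums] at hy
  obtain ⟨x, hx, rfl⟩ := hy
  exact ⟨x, ⟨hx, hyc⟩, rfl⟩

theorem stmt_9_general (β : ℝ) (hint : IsIntegral ℤ β)
    (hpisot : ∀ r ∈ ((minpoly ℤ β).map (Int.castRingHom ℂ)).roots,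
      r ≠ (β : ℂ) → ‖r‖ < 1) :
    (∀ (d : ℕ), 0 < d → ∀ c : ℝ, 0 < c →
      ({r : ℝ | ∃ (n : ℕ) (a : ℕ → ℤ), (∀ k, |a k| ≤ (d : ℤ)) ∧
          r = ∑ k ∈ Finset.range (n + 1), (a k : ℝ) * β ^ k} ∩
        Set.Icc (-c) c).Finite) ∧
      ({r : ℝ | ∃ (n : ℕ) (a : ℕ → ℤ), (∀ k, |a k| ≤ ⌈β⌉ - 1) ∧
          r = ∑ k ∈ Finset.range (n + 1), (a k : ℝ) * β ^ k} ∩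
        Set.Icc (-((⌈β⌉ - 1 : ℝ)) / (β - 1)) ((⌈β⌉ - 1 : ℝ) / (β - 1))).Finite := by
  refine ⟨fun d _ c _ => finite_digitSums_inter_Icc hint hpisot d c, ?_⟩
  rw [neg_div]
  exact finite_digitSums_inter_Icc hint hpisot _ _

/-- For a Pisot number β, every bounded part Y_d(β) ∩ [-c, c] of the spectrum is finite
(for any positive integer d and any c > 0); in particular (d = ⌈β⌉-1,
c = (⌈β⌉-1)/(β-1)) every Pisot number is an F-number. -/
theorem stmt_9 (β : ℝ) (hβ : 1 < β) (hint : IsIntegral ℤ β)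
    (hpisot : ∀ r ∈ ((minpoly ℤ β).map (Int.castRingHom ℂ)).roots,
      r ≠ (β : ℂ) → ‖r‖ < 1) :
    (∀ (d : ℕ), 0 < d → ∀ c : ℝ, 0 < c →
      ({r : ℝ | ∃ (n : ℕ) (a : ℕ → ℤ), (∀ k, |a k| ≤ (d : ℤ)) ∧
          r = ∑ k ∈ Finset.range (n + 1), (a k : ℝ) * β ^ k} ∩
        Set.Icc (-c) c).Finite) ∧
      ({r : ℝ | ∃ (n : ℕ) (a : ℕ → ℤ), (∀ k, |a k| ≤ ⌈β⌉ - 1) ∧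
          r = ∑ k ∈ Finset.range (n + 1), (a k : ℝ) * β ^ k} ∩
        Set.Icc (-((⌈β⌉ - 1 : ℝ)) / (β - 1)) ((⌈β⌉ - 1 : ℝ) / (β - 1))).Finite :=
  stmt_9_general β hint hpisot
end
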